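/- arXiv:1502.07800 — 8 statements merged into one kernel-verified Lean document; each statement's English description precedes it below -/
import Mathlib

section
/- Let C be a symmetric monoidal category and F : C ⇄ D : G a symmetric monoidal adjunction (F strong symmetric monoidal) between symmetric monoidal categories. If the unit map 𝟙_C → G(F(𝟙_C)) is an isomorphism (equivalently A → (F A)-fixed object for the unit A = 𝟙), then the full subcategory T of objects X with invertible unit map X → G(F(X)) contains all dualizable objects of C. -/
/-!
The unit of `F ⊣ G` is invertible at `X` exactly when `F` is bijective on morphisms into `X`.
If `(Y, X)` is an exact pairing, morphisms `W ⟶ Z ⊗ X` correspond to morphisms `W ⊗ Y ⟶ Z`, and a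
strong monoidal `F` carries this correspondence to the one for the exact pairing `(F Y, F X)`.
Hence `F` is bijective on morphisms into `Z ⊗ X` whenever it is on morphisms into `Z`; take
`Z = 𝟙_ C` and `Y = ᘁX`.
-/

open CategoryTheory MonoidalCategory Functor.LaxMonoidal Functor.OplaxMonoidal

namespace CategoryTheory

variable {C D : Type*} [Category C] [Category D]

theorem Adjunction.isIso_unit_app_iff_bijective_map {F : C ⥤ D} {G : D ⥤ C} (adj : F ⊣ G)
    (X : C) : IsIso (adj.unit.app X) ↔ ∀ W, Function.Bijective (fun f : W ⟶ X => F.map f) := by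
  rw [isIso_iff_yoneda_map_bijective]
  refine forall_congr' fun W => ?_
  have hcomp : (fun f : W ⟶ X => f ≫ adj.unit.app X) = adj.homEquiv W (F.obj X) ∘ F.map := by
    ext f
    simp [Adjunction.homEquiv_unit]
  exact hcomp ▸ Function.Bijective.of_comp_iff' (adj.homEquiv _ _).bijective _

variable [MonoidalCategory C] [MonoidalCategory D]

abbrev Functor.Monoidal.exactPairing (F : C ⥤ D) [F.Monoidal] (X Y : C) [ExactPairing X Y] :
    ExactPairing (F.obj X) (F.obj Y) where
  coevaluation' := ε F ≫ F.map (η_ X Y) ≫ δ F X Y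
  evaluation' := μ F Y X ≫ F.map (ε_ X Y) ≫ η F
  -- Both zigzag identities are images under `F` of those of `(X, Y)`, with the outer
  -- structure maps of `F` cancelled.
  coevaluation_evaluation' := by
    have h := congrArg F.map (ExactPairing.coevaluation_evaluation X Y)
    simp only [F.map_comp, Functor.Monoidal.map_whiskerLeft, Functor.Monoidal.map_associator_inv,
      Functor.Monoidal.map_whiskerRight, Functor.Monoidal.map_rightUnitor,
      Functor.Monoidal.map_leftUnitor_inv, Category.assoc, Functor.Monoidal.μ_δ_assoc,
      cancel_epi] at h
    simp only [← Category.assoc] at h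
    rw [cancel_mono] at h
    simp only [Category.assoc] at h
    simp only [MonoidalCategory.whiskerLeft_comp, comp_whiskerRight, Category.assoc]
    slice_lhs 2 6 => rw [h]
    simp
  evaluation_coevaluation' := by
    have h := congrArg F.map (ExactPairing.evaluation_coevaluation X Y)
    simp only [F.map_comp, Functor.Monoidal.map_whiskerLeft, Functor.Monoidal.map_associator,
      Functor.Monoidal.map_whiskerRight, Functor.Monoidal.map_leftUnitor,
      Functor.Monoidal.map_rightUnitor_inv, Category.assoc, Functor.Monoidal.μ_δ_assoc,
      cancel_epi] at h
    simp only [← Category.assoc] at h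
    rw [cancel_mono] at h
    simp only [Category.assoc] at h
    simp only [MonoidalCategory.whiskerLeft_comp, comp_whiskerRight, Category.assoc]
    slice_lhs 2 6 => rw [h]
    simp

theorem Functor.Monoidal.exactPairing_coevaluation (F : C ⥤ D) [F.Monoidal] (X Y : C)
    [ExactPairing X Y] :
    letI := exactPairing F X Y
    η_ (F.obj X) (F.obj Y) = ε F ≫ F.map (η_ X Y) ≫ δ F X Y :=
  rfl

theorem Functor.Monoidal.map_tensorRightHomEquiv (F : C ⥤ D) [F.Monoidal] {W X Y Z : C}
    [ExactPairing X Y] (g : W ⊗ X ⟶ Z) :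
    letI := exactPairing F X Y
    F.map (tensorRightHomEquiv W X Y Z g) =
      tensorRightHomEquiv (F.obj W) (F.obj X) (F.obj Y) (F.obj Z) (μ F W X ≫ F.map g) ≫
        μ F Z Y := by
  simp only [tensorRightHomEquiv, Equiv.coe_fn_mk, exactPairing_coevaluation, F.map_comp,
    Functor.Monoidal.map_rightUnitor_inv, Functor.Monoidal.map_whiskerLeft,
    Functor.Monoidal.map_associator_inv, Functor.Monoidal.map_whiskerRight, Category.assoc,
    Functor.Monoidal.μ_δ_assoc, MonoidalCategory.whiskerLeft_comp, comp_whiskerRight]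

theorem Adjunction.isIso_unit_app_tensor_of_exactPairing {F : C ⥤ D} [F.Monoidal] {G : D ⥤ C}
    (adj : F ⊣ G) {Z : C} (Y X : C) [ExactPairing Y X] (hZ : IsIso (adj.unit.app Z)) :
    IsIso (adj.unit.app (Z ⊗ X)) := by
  let := Functor.Monoidal.exactPairing F Y X
  rw [isIso_unit_app_iff_bijective_map] at hZ ⊢
  intro W
  have hmap : (fun f : W ⟶ Z ⊗ X => F.map f) ∘ tensorRightHomEquiv W Y X Z =
      (· ≫ μ F Z X) ∘ tensorRightHomEquiv (F.obj W) (F.obj Y) (F.obj X) (F.obj Z) ∘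
        (μ F W Y ≫ ·) ∘ (fun g : W ⊗ Y ⟶ Z => F.map g) := by
    ext g
    exact Functor.Monoidal.map_tensorRightHomEquiv F g
  rw [← Function.Bijective.of_comp_iff _ (tensorRightHomEquiv W Y X Z).bijective, hmap]
  exact ((isIso_iff_yoneda_map_bijective _).mp inferInstance _).comp <|
    (Equiv.bijective _).comp <|
      ((isIso_iff_coyoneda_map_bijective _).mp inferInstance _).comp (hZ _)

end CategoryTheory

/-- Let `F ⊣ G` be an adjunction between symmetric monoidal categories with `F` strong
symmetric monoidal.  If the unit map of the adjunction is an isomorphism at the monoidal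
unit `𝟙_ C`, then the full subcategory of objects with invertible unit map contains every
dualizable object: the unit map is an isomorphism at every dualizable `X`. -/
theorem stmt2 {C D : Type*} [Category C] [Category D]
    [MonoidalCategory C] [SymmetricCategory C]
    [MonoidalCategory D] [SymmetricCategory D]
    (F : C ⥤ D) [F.Braided] (G : D ⥤ C) (adj : F ⊣ G)
    (h1 : IsIso (adj.unit.app (𝟙_ C)))
    (X : C) [HasLeftDual X] :
    IsIso (adj.unit.app X) := by
  have hunit_tensor := adj.isIso_unit_app_tensor_of_exactPairing (ᘁX) X h1
  exact (NatTrans.isIso_app_iff_of_iso adj.unit (λ_ X)).mp hunit_tensor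
end

section
/- Let F : C ⇄ D : G be a symmetric monoidal adjunction between symmetric monoidal closed categories with F strong symmetric monoidal and η : id → G∘F the unit. If X is a dualizable object of C, then there is a natural isomorphism G(F(X)) ≅ G(F(𝟙)) ⊗ X. Consequently, if η_𝟙 is an isomorphism then η_X is an isomorphism for every dualizable X. -/
/-!
A strong monoidal functor preserves duality, so `F (ᘁX)` is a left dual of `F X`. Then
`G ⋙ (- ⊗ X)` and `(- ⊗ F X) ⋙ G` are both right adjoint to `(- ⊗ ᘁX) ⋙ F ≅ F ⋙ (- ⊗ F ᘁX)`,
which gives the projection formula `G (V ⊗ F X) ≅ G V ⊗ X`. For the second part, `η_W` is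
invertible iff `F` is bijective on morphisms into `W`, and duality turns morphisms `Z ⟶ W ⊗ X`
into morphisms `Z ⊗ ᘁX ⟶ W`, compatibly with `F`.
-/

open CategoryTheory MonoidalCategory Functor.LaxMonoidal Functor.OplaxMonoidal

namespace CategoryTheory.Functor.Monoidal

variable {C D : Type*} [Category C] [Category D] [MonoidalCategory C] [MonoidalCategory D]
  (F : C ⥤ D) [F.Monoidal]

instance exactPairing_s3 (A B : C) [ExactPairing A B] : ExactPairing (F.obj A) (F.obj B) where
  coevaluation' := ε F ≫ F.map (η_ A B) ≫ δ F A B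
  evaluation' := μ F B A ≫ F.map (ε_ A B) ≫ η F
  coevaluation_evaluation' := by
    have h := F.congr_map (ExactPairing.coevaluation_evaluation A B)
    simp only [F.map_comp, map_whiskerLeft, map_whiskerRight, map_associator_inv, map_rightUnitor,
      map_leftUnitor_inv, Category.assoc, μ_δ_assoc, cancel_epi] at h
    simp only [← Category.assoc] at h
    rw [cancel_mono] at h
    simp only [Category.assoc] at h
    simp [reassoc_of% h]
  evaluation_coevaluation' := by
    have h := F.congr_map (ExactPairing.evaluation_coevaluation A B)
    simp only [F.map_comp, map_whiskerLeft, map_whiskerRight, map_associator, map_rightUnitor_inv,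
      map_leftUnitor, Category.assoc, μ_δ_assoc, cancel_epi] at h
    simp only [← Category.assoc] at h
    rw [cancel_mono] at h
    simp only [Category.assoc] at h
    simp [reassoc_of% h]

theorem coevaluation_obj (A B : C) [ExactPairing A B] :
    η_ (F.obj A) (F.obj B) = ε F ≫ F.map (η_ A B) ≫ δ F A B := rfl

theorem map_tensorRightHomEquiv_s3 {Y Y' : C} [ExactPairing Y Y'] {Z W : C} (g : Z ⊗ Y ⟶ W) :
    F.map (tensorRightHomEquiv Z Y Y' W g) =
      tensorRightHomEquiv (F.obj Z) (F.obj Y) (F.obj Y') (F.obj W) (μ F Z Y ≫ F.map g) ≫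
        μ F W Y' := by
  simp only [tensorRightHomEquiv, Equiv.coe_fn_mk, coevaluation_obj, F.map_comp,
    map_rightUnitor_inv, map_whiskerLeft, map_associator_inv, map_whiskerRight, Category.assoc,
    μ_δ_assoc, MonoidalCategory.whiskerLeft_comp, MonoidalCategory.comp_whiskerRight]

end CategoryTheory.Functor.Monoidal

namespace CategoryTheory.Adjunction

variable {C D : Type*} [Category C] [Category D] {F : C ⥤ D} {G : D ⥤ C} (adj : F ⊣ G)

theorem isIso_unit_app_iff_bijective (W : C) :
    IsIso (adj.unit.app W) ↔ ∀ Z, Function.Bijective (F.map : (Z ⟶ W) → (F.obj Z ⟶ F.obj W)) := by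
  have h : ∀ Z, (· ≫ adj.unit.app W) = adj.homEquiv Z (F.obj W) ∘ F.map := fun Z => by
    funext f
    simp [homEquiv_unit]
  simp only [isIso_iff_yoneda_map_bijective, h, Equiv.comp_bijective]

variable [MonoidalCategory C] [MonoidalCategory D] [F.Monoidal]

def rightAdjointCommTensorRight (Y Y' : C) [ExactPairing Y Y'] :
    tensorRight (F.obj Y') ⋙ G ≅ G ⋙ tensorRight Y' :=
  ((adj.comp (tensorRightAdjunction (F.obj Y) (F.obj Y'))).ofNatIsoLeft
    (Functor.Monoidal.commTensorRight F Y)).rightAdjointUniq ((tensorRightAdjunction Y Y').comp adj)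

theorem isIso_unit_app_tensor (W Y Y' : C) [ExactPairing Y Y'] [IsIso (adj.unit.app W)] :
    IsIso (adj.unit.app (W ⊗ Y')) := by
  have hW := (adj.isIso_unit_app_iff_bijective W).1 ‹_›
  rw [isIso_unit_app_iff_bijective]
  intro Z
  let e : (F.obj (Z ⊗ Y) ⟶ F.obj W) ≃ (F.obj Z ⟶ F.obj (W ⊗ Y')) :=
    ((Functor.Monoidal.μIso F Z Y).symm.homCongr (Iso.refl _)).trans
      ((tensorRightHomEquiv (F.obj Z) (F.obj Y) (F.obj Y') (F.obj W)).trans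
        ((Iso.refl _).homCongr (Functor.Monoidal.μIso F W Y')))
  have h : (F.map : (Z ⟶ W ⊗ Y') → _) = e ∘ F.map ∘ (tensorRightHomEquiv Z Y Y' W).symm := by
    funext f
    simpa [e] using
      Functor.Monoidal.map_tensorRightHomEquiv_s3 F (Y' := Y') ((tensorRightHomEquiv Z Y Y' W).symm f)
  rw [h, Equiv.comp_bijective, Equiv.bijective_comp]
  exact hW (Z ⊗ Y)

end CategoryTheory.Adjunction

theorem stmt3_general {C D : Type*} [Category C] [Category D]
    [MonoidalCategory C] [SymmetricCategory C]
    [MonoidalCategory D] [SymmetricCategory D]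
    (F : C ⥤ D) [F.Braided] (G : D ⥤ C) (adj : F ⊣ G)
    (X : C) [HasLeftDual X] :
    Nonempty (G.obj (F.obj X) ≅ G.obj (F.obj (𝟙_ C)) ⊗ X) ∧
      (IsIso (adj.unit.app (𝟙_ C)) → IsIso (adj.unit.app X)) := by
  have projection : G.obj (F.obj X) ≅ G.obj (F.obj (𝟙_ C)) ⊗ X :=
    G.mapIso (F.mapIso (λ_ X).symm ≪≫ (Functor.Monoidal.μIso F (𝟙_ C) X).symm) ≪≫
      (adj.rightAdjointCommTensorRight (ᘁX) X).app (F.obj (𝟙_ C))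
  refine ⟨⟨projection⟩, fun _ => ?_⟩
  have := adj.isIso_unit_app_tensor (𝟙_ C) (ᘁX) X
  exact (NatTrans.isIso_app_iff_of_iso adj.unit (λ_ X)).1 this

/-- Let `F ⊣ G` be a symmetric monoidal adjunction between symmetric monoidal closed
categories, with `F` strong symmetric monoidal and unit `η`.  If `X` is dualizable, then
`G(F(X)) ≅ G(F(𝟙)) ⊗ X`; consequently, if `η` is an isomorphism at the monoidal unit,
then it is an isomorphism at every dualizable `X`. -/
theorem stmt3 {C D : Type*} [Category C] [Category D]
    [MonoidalCategory C] [SymmetricCategory C] [MonoidalClosed C]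
    [MonoidalCategory D] [SymmetricCategory D] [MonoidalClosed D]
    (F : C ⥤ D) [F.Braided] (G : D ⥤ C) (adj : F ⊣ G)
    (X : C) [HasLeftDual X] :
    Nonempty (G.obj (F.obj X) ≅ G.obj (F.obj (𝟙_ C)) ⊗ X) ∧
      (IsIso (adj.unit.app (𝟙_ C)) → IsIso (adj.unit.app X)) :=
  stmt3_general F G adj X
end

section
/- The full subcategory T of objects X in a triangulated category (or, in Lean, an additive category with a compatible shift/exact structure) on which the unit of an exact adjunction L ⊣ R is an isomorphism is a thick subcategory: it is closed under isomorphisms, shifts, extensions (cones), and direct summands. -/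
/-!
Through the adjunction, the compatibility of `L` with shifts induces one on `R` for which the
unit `η : 𝟭 C ⟶ L ⋙ R` commutes with shifts, and `R`, hence `L ⋙ R`, is then triangulated.
So `η` maps each distinguished triangle to a morphism of distinguished triangles, and the five
lemma gives closure under extensions. The locus where a natural transformation is invertible is
always closed under isomorphisms and retracts, and under shifts if it commutes with them.
-/

open CategoryTheory Limits Pretriangulated

namespace CategoryTheory

namespace NatTrans

variable {C D : Type*} [Category C] [Category D]

lemma isIso_app_of_retract {F G : C ⥤ D} (τ : F ⟶ G) {X Y : C} (h : Retract X Y)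
    [IsIso (τ.app Y)] : IsIso (τ.app X) :=
  (MorphismProperty.isomorphisms D).of_retract (τ.retractArrowApp h) (.infer_property _)

lemma isIso_app_shift {A : Type*} [AddMonoid A] [HasShift C A] [HasShift D A]
    {F G : C ⥤ D} [F.CommShift A] [G.CommShift A] (τ : F ⟶ G) [NatTrans.CommShift τ A]
    (X : C) (a : A) [IsIso (τ.app X)] : IsIso (τ.app (X⟦a⟧)) := by
  rw [NatTrans.app_shift τ a X]
  infer_instance

variable [HasZeroObject C] [HasZeroObject D] [Preadditive C] [Preadditive D]
  [HasShift C ℤ] [HasShift D ℤ]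
  [∀ n : ℤ, (shiftFunctor C n).Additive] [∀ n : ℤ, (shiftFunctor D n).Additive]
  [Pretriangulated C] [Pretriangulated D]
  {F G : C ⥤ D} [F.CommShift ℤ] [G.CommShift ℤ]

def mapTriangleHom (τ : F ⟶ G) [NatTrans.CommShift τ ℤ] (T : Triangle C) :
    F.mapTriangle.obj T ⟶ G.mapTriangle.obj T where
  hom₁ := τ.app T.obj₁
  hom₂ := τ.app T.obj₂
  hom₃ := τ.app T.obj₃
  comm₁ := τ.naturality T.mor₁
  comm₂ := τ.naturality T.mor₂
  comm₃ := by
    change (F.map T.mor₃ ≫ (F.commShiftIso (1 : ℤ)).hom.app T.obj₁) ≫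
        (τ.app T.obj₁)⟦(1 : ℤ)⟧' =
      τ.app T.obj₃ ≫ G.map T.mor₃ ≫ (G.commShiftIso (1 : ℤ)).hom.app T.obj₁
    rw [Category.assoc, NatTrans.shift_app_comm, τ.naturality_assoc]

lemma isIso_app₂_of_isIso_app₁₃ [F.IsTriangulated] [G.IsTriangulated] (τ : F ⟶ G)
    [NatTrans.CommShift τ ℤ] (T : Triangle C) (hT : T ∈ distTriang C)
    (h₁ : IsIso (τ.app T.obj₁)) (h₃ : IsIso (τ.app T.obj₃)) : IsIso (τ.app T.obj₂) :=
  isIso₂_of_isIso₁₃ (mapTriangleHom τ T) (F.map_distinguished T hT)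
    (G.map_distinguished T hT) h₁ h₃

end NatTrans

end CategoryTheory

/-- For an adjunction `L ⊣ R` of exact (triangulated) functors between (pre)triangulated
categories, the full subcategory `T = {X | η_X : X → R(L X) is an isomorphism}` is a thick
subcategory: it is closed under isomorphisms, shifts, extensions (cones in distinguished
triangles) and direct summands. -/
theorem stmt4 {C D : Type*} [Category C] [Category D]
    [HasZeroObject C] [HasZeroObject D] [Preadditive C] [Preadditive D]
    [HasShift C ℤ] [HasShift D ℤ]
    [∀ n : ℤ, (shiftFunctor C n).Additive] [∀ n : ℤ, (shiftFunctor D n).Additive]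
    [Pretriangulated C] [Pretriangulated D] [HasBinaryBiproducts C]
    (L : C ⥤ D) (R : D ⥤ C) [L.CommShift ℤ] [R.CommShift ℤ]
    [L.IsTriangulated] [R.IsTriangulated]
    (adj : L ⊣ R) :
    (∀ X Y : C, (X ≅ Y) → IsIso (adj.unit.app X) → IsIso (adj.unit.app Y)) ∧
    (∀ (X : C) (n : ℤ), IsIso (adj.unit.app X) → IsIso (adj.unit.app (X⟦n⟧))) ∧
    (∀ T : Triangle C, T ∈ (distTriang C) → IsIso (adj.unit.app T.obj₁) →
      IsIso (adj.unit.app T.obj₃) → IsIso (adj.unit.app T.obj₂)) ∧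
    (∀ X Y : C, IsIso (adj.unit.app (X ⊞ Y)) → IsIso (adj.unit.app X)) := by
  -- shadows `[R.CommShift ℤ]`, with which `adj.unit` need not commute
  let := adj.rightAdjointCommShift ℤ
  have := adj.commShift_of_leftAdjoint ℤ
  have := adj.isTriangulated_rightAdjoint
  refine ⟨fun X Y e => (NatTrans.isIso_app_iff_of_iso _ e).1,
    fun X n _ => NatTrans.isIso_app_shift adj.unit X n,
    NatTrans.isIso_app₂_of_isIso_app₁₃ adj.unit,
    fun X Y _ => NatTrans.isIso_app_of_retract adj.unit
      (Y := X ⊞ Y) ⟨biprod.inl, biprod.fst, biprod.inl_fst⟩⟩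
end

section
/- Let G be a profinite group and let A be the opposite of the category of finite discrete G-sets. The Yoneda-type functor sending a discrete G-set X to the functor A → Set, S ↦ Hom_{Set(G)}(S, X), induces an equivalence between the category of discrete G-sets and the category of finite-limit-preserving functors Fun^Lex(A, Set). -/
open CategoryTheory Limits

universe u

/-- A discrete `G`-set for a topological group `G`: a `G`-set all of whose stabilizers are
open subgroups. -/
structure DGSet (G : Type u) [Group G] [TopologicalSpace G] where
  carrier : Type u
  [mulAction : MulAction G carrier]
  isOpen_stabilizer : ∀ x : carrier, IsOpen ((MulAction.stabilizer G x : Subgroup G) : Set G)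

attribute [instance] DGSet.mulAction

variable (G : Type u) [Group G] [TopologicalSpace G]

instance : Category.{u} (DGSet G) where
  Hom X Y := {f : X.carrier → Y.carrier // ∀ (g : G) (x : X.carrier), f (g • x) = g • f x}
  id X := ⟨fun x => x, fun _ _ => rfl⟩
  comp f g := ⟨fun x => g.1 (f.1 x), fun γ x => by simp only [f.2, g.2]⟩
  id_comp := by intros; rfl
  comp_id := by intros; rfl
  assoc := by intros; rfl

/-!
Restricting `X ↦ Hom(-, X)` to finite discrete `G`-sets gives left exact functors because the
finite discrete `G`-sets are closed under finite colimits, computed on underlying sets.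

Full faithfulness: for `G` compact and `x` a point of a discrete `G`-set, the stabilizer of `x`
is open of finite index, so the orbit map `G ⧸ Stab x → X` is a map out of a finite discrete
`G`-set sending the trivial coset to `x`. A natural transformation `α` is thus determined by the
function `x ↦ α(orbit map of x)(1)`, which is equivariant.

Essential surjectivity: a left exact `F` has a cofiltered category of elements, and `F` is
recovered from the filtered colimit `X` of the finite `G`-sets `S` indexed by the elements
`(S, a)`. As each `S` is finite, a map `S → X` factors through a single stage, and two elements
of `F(S)` giving the same map `S → X` already agree at some stage.
-/

namespace CategoryTheory.Functor

variable {J : Type*} [Category J] (F : J ⥤ Type*)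

lemma exists_ιColimitType_eq_of_finite [IsFiltered J] {ι : Type*} [Finite ι]
    (t : ι → F.ColimitType) :
    ∃ j, ∃ y : ι → F.obj j, ∀ i, F.ιColimitType j (y i) = t i := by
  classical
  have : Fintype ι := Fintype.ofFinite ι
  choose j x hx using fun i => F.ιColimitType_jointly_surjective (t i)
  obtain ⟨m, hm⟩ := IsFiltered.sup_objs_exists (Finset.univ.image j)
  refine ⟨m, fun i => F.map (hm (Finset.mem_image_of_mem j (Finset.mem_univ i))).some (x i),
    fun i => ?_⟩
  rw [ιColimitType_map, hx]

variable [IsFilteredOrEmpty J]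

lemma exists_map_eq_map_of_ιColimitType_eq {j : J} {x y : F.obj j}
    (h : F.ιColimitType j x = F.ιColimitType j y) :
    ∃ k, ∃ f : j ⟶ k, F.map f x = F.map f y := by
  rw [ιColimitType_eq_iff, ← Limits.Types.FilteredColimit.rel_eq_eqvGen_colimitTypeRel] at h
  obtain ⟨k, f, g, hfg⟩ := h
  obtain ⟨l, h, hh⟩ := IsFilteredOrEmpty.cocone_maps f g
  refine ⟨l, f ≫ h, ?_⟩
  rw [map_comp_apply, hfg, ← map_comp_apply, hh, map_comp_apply]

lemma exists_hom_map_eq_map_of_finite (j : J) [Finite (F.obj j)] :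
    ∃ k, ∃ f : j ⟶ k,
      ∀ x y, F.ιColimitType j x = F.ιColimitType j y → F.map f x = F.map f y := by
  classical
  let P := {p : F.obj j × F.obj j // F.ιColimitType j p.1 = F.ιColimitType j p.2}
  have : Fintype P := Fintype.ofFinite P
  suffices ∀ s : Finset P, ∃ k, ∃ f : j ⟶ k, ∀ p ∈ s, F.map f p.1.1 = F.map f p.1.2 by
    obtain ⟨k, f, hf⟩ := this Finset.univ
    exact ⟨k, f, fun x y h => hf ⟨(x, y), h⟩ (Finset.mem_univ _)⟩
  intro s
  induction s using Finset.induction_on with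
  | empty => exact ⟨j, 𝟙 j, by simp⟩
  | insert p s _ ih =>
    obtain ⟨k, f, hf⟩ := ih
    obtain ⟨l, g, hg⟩ := F.exists_map_eq_map_of_ιColimitType_eq
      (x := F.map f p.1.1) (y := F.map f p.1.2) (by simpa using p.2)
    refine ⟨l, f ≫ g, fun q hq => ?_⟩
    rw [map_comp_apply, map_comp_apply]
    rcases Finset.mem_insert.1 hq with rfl | hq
    · exact hg
    · rw [hf q hq]

end CategoryTheory.Functor

namespace DGSet

open Opposite

variable {G}

@[ext]
lemma hom_ext {X Y : DGSet G} {f g : X ⟶ Y} (h : ∀ x, f.1 x = g.1 x) : f = g :=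
  Subtype.ext (funext h)

lemma isOpen_stabilizer_apply [SeparatelyContinuousMul G] {α β : Type*} [MulAction G α]
    [MulAction G β] (f : α → β) (hf : ∀ (g : G) a, f (g • a) = g • f a) {a : α}
    (ha : IsOpen (MulAction.stabilizer G a : Set G)) :
    IsOpen (MulAction.stabilizer G (f a) : Set G) :=
  Subgroup.isOpen_mono (fun g (hg : g • a = a) => show g • f a = f a by rw [← hf, hg]) ha

lemma finite_of_iso {X Y : DGSet G} (e : X ≅ Y) [Finite X.carrier] : Finite Y.carrier :=
  Finite.of_surjective e.hom.1 fun y =>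
    ⟨e.inv.1 y, congrFun (congrArg Subtype.val e.inv_hom_id) y⟩

section Colimit

variable {J : Type*} [Category J] (K : J ⥤ DGSet G)

abbrev carrierDiagram : J ⥤ Type u where
  obj j := (K.obj j).carrier
  map f := TypeCat.ofHom (K.map f).1

instance : MulAction G (carrierDiagram K).ColimitType where
  smul g := Quot.map (fun p => ⟨p.1, g • p.2⟩) (by
    rintro ⟨j, x⟩ ⟨j', y⟩ ⟨f, hf⟩
    exact ⟨f, by rw [hf]; exact ((K.map f).2 g x).symm⟩)
  one_smul := by rintro ⟨⟨j, x⟩⟩; exact congrArg (Quot.mk _) (by simp)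
  mul_smul g h := by rintro ⟨⟨j, x⟩⟩; exact congrArg (Quot.mk _) (by simp [mul_smul])

lemma smul_ιColimitType (g : G) (j : J) (x : (K.obj j).carrier) :
    g • (carrierDiagram K).ιColimitType j x = (carrierDiagram K).ιColimitType j (g • x) := rfl

variable [Small.{u} (carrierDiagram K).ColimitType]

lemma equivShrink_ιColimitType_smul (j : J) (g : G) (x : (K.obj j).carrier) :
    equivShrink _ ((carrierDiagram K).ιColimitType j (g • x)) =
      g • equivShrink _ ((carrierDiagram K).ιColimitType j x) := by
  rw [← smul_ιColimitType, equivShrink_smul]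

variable [ContinuousMul G]

noncomputable def colimitObj : DGSet G where
  carrier := Shrink (carrierDiagram K).ColimitType
  isOpen_stabilizer y := by
    obtain ⟨j, x, hx⟩ :=
      (carrierDiagram K).ιColimitType_jointly_surjective ((equivShrink _).symm y)
    rw [← (equivShrink _).apply_symm_apply y, ← hx]
    exact isOpen_stabilizer_apply (fun x => equivShrink _ ((carrierDiagram K).ιColimitType j x))
      (equivShrink_ιColimitType_smul K j)
      ((K.obj j).isOpen_stabilizer x)

noncomputable def colimitι (j : J) : K.obj j ⟶ colimitObj K :=
  ⟨fun x => equivShrink _ ((carrierDiagram K).ιColimitType j x),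
    equivShrink_ιColimitType_smul K j⟩

lemma colimitι_jointly_surjective (y : (colimitObj K).carrier) :
    ∃ j x, (colimitι K j).1 x = y := by
  obtain ⟨j, x, hx⟩ :=
    (carrierDiagram K).ιColimitType_jointly_surjective ((equivShrink _).symm y)
  refine ⟨j, x, ?_⟩
  show equivShrink _ _ = y
  rw [hx]
  exact (equivShrink _).apply_symm_apply y

noncomputable def colimitCocone : Cocone K where
  pt := colimitObj K
  ι.app := colimitι K
  ι.naturality j j' f := by
    ext x
    exact congrArg (equivShrink _) ((carrierDiagram K).ιColimitType_map f x)

variable {K}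

abbrev coconeTypesOfCocone (s : Cocone K) : (carrierDiagram K).CoconeTypes where
  pt := s.pt.carrier
  ι j := (s.ι.app j).1
  ι_naturality f := funext fun x => congrFun (congrArg Subtype.val (s.w f)) x

noncomputable def colimitDescFun (s : Cocone K) (y : (colimitObj K).carrier) : s.pt.carrier :=
  (carrierDiagram K).descColimitType (coconeTypesOfCocone s) ((equivShrink _).symm y)

lemma colimitDescFun_ι (s : Cocone K) (j : J) (x : (K.obj j).carrier) :
    colimitDescFun s ((colimitι K j).1 x) = (s.ι.app j).1 x := by
  show (carrierDiagram K).descColimitType _ ((equivShrink _).symm (equivShrink _ _)) = _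
  rw [Equiv.symm_apply_apply]
  rfl

noncomputable def colimitDesc (s : Cocone K) : colimitObj K ⟶ s.pt :=
  ⟨colimitDescFun s, fun g y => by
    obtain ⟨j, x, rfl⟩ := colimitι_jointly_surjective K y
    rw [← (colimitι K j).2 g x, colimitDescFun_ι, colimitDescFun_ι]
    exact (s.ι.app j).2 g x⟩

variable (K)

noncomputable def isColimitColimitCocone : IsColimit (colimitCocone K) where
  desc := colimitDesc
  fac s j := by ext x; exact colimitDescFun_ι s j x
  uniq s m hm := by
    ext y
    obtain ⟨j, x, rfl⟩ := colimitι_jointly_surjective K y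
    exact (congrFun (congrArg Subtype.val (hm j)) x).trans (colimitDescFun_ι s j x).symm

end Colimit

variable (G) in
abbrev FinDGSet := ObjectProperty.FullSubcategory (fun X : DGSet G => Finite X.carrier)

variable (G) in
def restrictedYoneda : DGSet G ⥤ (FinDGSet G)ᵒᵖ ⥤ Type u :=
  yoneda ⋙ (Functor.whiskeringLeft _ _ _).obj (ObjectProperty.ι _ : FinDGSet G ⥤ DGSet G).op

lemma app_comp_apply {X Y : DGSet G}
    (α : (restrictedYoneda G).obj X ⟶ (restrictedYoneda G).obj Y) {S T : FinDGSet G} (w : T ⟶ S) (u : S.obj ⟶ X) (t : T.obj.carrier) :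
    (α.app (op T) (w.hom ≫ u)).1 t = (α.app (op S) u).1 (w.hom.1 t) :=
  congrFun (congrArg Subtype.val (NatTrans.naturality_apply α w.op u)) t

abbrev elementsDiagram (F : (FinDGSet G)ᵒᵖ ⥤ Type u) : F.Elementsᵒᵖ ⥤ DGSet G :=
  (CategoryOfElements.π F).leftOp ⋙ ObjectProperty.ι _

lemma eq_of_elementsDiagram_map_eq {F : (FinDGSet G)ᵒᵖ ⥤ Type u} {S : FinDGSet G}
    {a b : F.obj (op S)} {k : F.Elementsᵒᵖ}
    (p : op (F.elementsMk _ a) ⟶ k) (q : op (F.elementsMk _ b) ⟶ k)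
    (h : (elementsDiagram F).map p = (elementsDiagram F).map q) : a = b := by
  have hpq : p.unop.1 = q.unop.1 := Quiver.Hom.unop_inj (ObjectProperty.hom_ext _ h)
  calc a = F.map p.unop.1 k.unop.2 := p.unop.2.symm
    _ = F.map q.unop.1 k.unop.2 := by rw [hpq]
    _ = b := q.unop.2

variable [ContinuousMul G]

instance {J : Type*} [Category J] [Small.{u} J] : HasColimitsOfShape J (DGSet G) where
  has_colimit K := ⟨⟨⟨colimitCocone K, isColimitColimitCocone K⟩⟩⟩

instance {J : Type*} [Category J] [Finite J] :
    ObjectProperty.IsClosedUnderColimitsOfShape (fun X : DGSet G => Finite X.carrier) J where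
  colimitsOfShape_le := by
    rintro X ⟨p⟩
    have := p.prop_diag_obj
    have : Finite (carrierDiagram p.diag).ColimitType :=
      Finite.of_surjective (fun x : Σ j, (p.diag.obj j).carrier => Quot.mk _ x)
        Quot.mk_surjective
    have : Finite (colimitCocone p.diag).pt.carrier := Finite.of_equiv _ (equivShrink _)
    exact finite_of_iso
      (p.isColimit.coconePointUniqueUpToIso (isColimitColimitCocone p.diag)).symm

instance : HasFiniteColimits (FinDGSet G) where
  out _ _ _ := inferInstance

instance : PreservesFiniteColimits (ObjectProperty.ι _ : FinDGSet G ⥤ DGSet G) where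
  preservesFiniteColimits _ _ _ := inferInstance

instance (X : DGSet G) : PreservesFiniteLimits ((restrictedYoneda G).obj X) :=
  have : PreservesFiniteLimits (ObjectProperty.ι _ : FinDGSet G ⥤ DGSet G).op :=
    preservesFiniteLimits_op _
  comp_preservesFiniteLimits (ObjectProperty.ι _).op (yoneda.obj X)

variable (G) in
noncomputable def leftExactRestrictedYoneda :
    DGSet G ⥤ ObjectProperty.FullSubcategory
      (fun F : (FinDGSet G)ᵒᵖ ⥤ Type u => PreservesFiniteLimits F) :=
  ObjectProperty.lift _ (restrictedYoneda G) fun _ => inferInstance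

section Quotient

variable {H : Subgroup G} (hH : IsOpen (H : Set G))

def quotient : DGSet G where
  carrier := G ⧸ H
  isOpen_stabilizer :=
    have := QuotientGroup.discreteTopology hH
    stabilizer_isOpen G

def finQuotient [CompactSpace G] : FinDGSet G :=
  ⟨quotient hH, Subgroup.quotient_finite_of_isOpen H hH⟩

def quotientLift {X : DGSet G} (x : X.carrier) (hx : H ≤ MulAction.stabilizer G x) :
    quotient hH ⟶ X :=
  ⟨fun q => Quotient.liftOn' q (· • x) fun a b hab => by
      rw [QuotientGroup.leftRel_apply] at hab
      rw [← mul_inv_cancel_left a b, mul_smul, hx hab],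
    fun g q => by
      induction q using QuotientGroup.induction_on with
      | H a => exact mul_smul g a x⟩

variable [CompactSpace G] {X : DGSet G} (x : X.carrier)

abbrev orbitQuotient : FinDGSet G :=
  finQuotient (X.isOpen_stabilizer x)

abbrev orbitMap : (orbitQuotient x).obj ⟶ X :=
  quotientLift (X.isOpen_stabilizer x) x le_rfl

end Quotient

section FullyFaithful

variable [CompactSpace G] {X Y : DGSet G}
  (α : (restrictedYoneda G).obj X ⟶ (restrictedYoneda G).obj Y)

def evalAtOrbit (x : X.carrier) : Y.carrier :=
  (α.app (op (orbitQuotient x)) (orbitMap x)).1 ((1 : G) : G ⧸ MulAction.stabilizer G x)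

lemma app_quotientLift_apply_one {H : Subgroup G} (hH : IsOpen (H : Set G)) (x : X.carrier)
    (hx : H ≤ MulAction.stabilizer G x) :
    (α.app (op (finQuotient hH)) (quotientLift hH x hx)).1 ((1 : G) : G ⧸ H) =
      evalAtOrbit α x := by
  let π : finQuotient hH ⟶ orbitQuotient x :=
    ObjectProperty.homMk (quotientLift hH ((1 : G) : G ⧸ MulAction.stabilizer G x)
      fun h hh => (MulAction.stabilizer_quotient _).ge (hx hh))
  have hfactor : quotientLift hH x hx = π.hom ≫ orbitMap x := by
    ext q
    induction q using QuotientGroup.induction_on with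
    | H a => show a • x = (a * 1) • x; rw [mul_one]
  rw [hfactor]
  exact (app_comp_apply α π _ _).trans (congrArg _ (congrArg _ (mul_one (1 : G))))

lemma app_apply_eq_evalAtOrbit {S : FinDGSet G} (u : S.obj ⟶ X) (s : S.obj.carrier) :
    (α.app (op S) u).1 s = evalAtOrbit α (u.1 s) := by
  let v : orbitQuotient s ⟶ S := ObjectProperty.homMk (orbitMap s)
  have hstab : MulAction.stabilizer G s ≤ MulAction.stabilizer G (u.1 s) :=
    fun g (hg : g • s = s) => show g • u.1 s = u.1 s by rw [← u.2, hg]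
  have hcomp : v.hom ≫ u = quotientLift (S.obj.isOpen_stabilizer s) (u.1 s) hstab := by
    ext q
    induction q using QuotientGroup.induction_on with
    | H a => exact u.2 a s
  let one : (orbitQuotient s).obj.carrier := ((1 : G) : G ⧸ MulAction.stabilizer G s)
  have hs : v.hom.1 one = s := one_smul G s
  calc (α.app (op S) u).1 s = (α.app (op S) u).1 (v.hom.1 one) := by rw [hs]
    _ = (α.app (op (orbitQuotient s)) (v.hom ≫ u)).1 one := (app_comp_apply α v u one).symm
    _ = evalAtOrbit α (u.1 s) :=
        (congrArg (fun w => (α.app (op (orbitQuotient s)) w).1 one) hcomp).trans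
          (app_quotientLift_apply_one α _ _ _)

lemma evalAtOrbit_smul (g : G) (x : X.carrier) :
    evalAtOrbit α (g • x) = g • evalAtOrbit α x := by
  let one : (orbitQuotient x).obj.carrier := ((1 : G) : G ⧸ MulAction.stabilizer G x)
  have hg : (orbitMap x).1 (g • one) = g • x :=
    ((orbitMap x).2 g one).trans (congrArg (g • ·) (one_smul G x))
  calc evalAtOrbit α (g • x) = (α.app (op (orbitQuotient x)) (orbitMap x)).1 (g • one) := by
        rw [app_apply_eq_evalAtOrbit, hg]
    _ = g • evalAtOrbit α x := (α.app (op (orbitQuotient x)) (orbitMap x)).2 g one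

def homOfNatTrans : X ⟶ Y :=
  ⟨evalAtOrbit α, evalAtOrbit_smul α⟩

variable (G) in
def fullyFaithfulRestrictedYoneda : (restrictedYoneda G).FullyFaithful where
  preimage := homOfNatTrans
  map_preimage α := by
    ext S u
    exact hom_ext fun s => (app_apply_eq_evalAtOrbit α u s).symm
  preimage_map f := by
    ext x
    exact congrArg f.1 (one_smul G x)

end FullyFaithful

section EssSurj

variable [CompactSpace G] (F : (FinDGSet G)ᵒᵖ ⥤ Type u)

-- The category of elements is large; every element is represented at some `G ⧸ H`, `H` open.
instance : Small.{u} (carrierDiagram (elementsDiagram F)).ColimitType := by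
  refine small_of_surjective (f := fun p : Σ H : {H : Subgroup G // IsOpen (H : Set G)},
      F.obj (op (finQuotient H.2)) =>
    (carrierDiagram (elementsDiagram F)).ιColimitType (op (F.elementsMk _ p.2))
      ((1 : G) : G ⧸ p.1.1)) fun t => ?_
  obtain ⟨e, s, rfl⟩ := (carrierDiagram (elementsDiagram F)).ιColimitType_jointly_surjective t
  let v : orbitQuotient s ⟶ e.unop.1.unop := ObjectProperty.homMk (orbitMap s)
  let φ : op (F.elementsMk _ (F.map v.op e.unop.2)) ⟶ e := Quiver.Hom.op ⟨v.op, rfl⟩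
  refine ⟨⟨⟨_, e.unop.1.unop.obj.isOpen_stabilizer s⟩, F.map v.op e.unop.2⟩, ?_⟩
  exact ((carrierDiagram (elementsDiagram F)).ιColimitType_map φ _).symm.trans
    (congrArg _ (one_smul G s))

noncomputable def ofPresheaf : DGSet G :=
  colimitObj (elementsDiagram F)

noncomputable def toRestrictedYoneda : F ⟶ (restrictedYoneda G).obj (ofPresheaf F) where
  app S := TypeCat.ofHom fun a => colimitι (elementsDiagram F) (op (F.elementsMk S a))
  naturality S S' φ := by
    ext a
    exact ((colimitCocone (elementsDiagram F)).w
      (show F.elementsMk S a ⟶ F.elementsMk S' (F.map φ a) from ⟨φ, rfl⟩).op).symm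

variable [PreservesFiniteLimits F]

instance : IsCofiltered F.Elements :=
  have : HasFiniteLimits F.Elements := ⟨fun _ _ _ => inferInstance⟩
  IsCofiltered.of_hasFiniteLimits _

lemma toRestrictedYoneda_app_injective (S : (FinDGSet G)ᵒᵖ) :
    Function.Injective ((toRestrictedYoneda F).app S) := by
  intro a b hab
  let D := carrierDiagram (elementsDiagram F)
  have hι (s) : D.ιColimitType (op (F.elementsMk S a)) s =
      D.ιColimitType (op (F.elementsMk S b)) s :=
    (equivShrink _).injective (congrFun (congrArg Subtype.val hab) s)
  obtain ⟨m, l, r, -⟩ :=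
    IsFilteredOrEmpty.cocone_objs (op (F.elementsMk S a)) (op (F.elementsMk S b))
  have : Finite (D.obj m) := m.unop.1.unop.property
  obtain ⟨k, f, hf⟩ := D.exists_hom_map_eq_map_of_finite m
  refine eq_of_elementsDiagram_map_eq (l ≫ f) (r ≫ f) (hom_ext fun s => ?_)
  exact hf (D.map l s) (D.map r s)
    ((D.ιColimitType_map l s).trans ((hι s).trans (D.ιColimitType_map r s).symm))

lemma toRestrictedYoneda_app_surjective (S : (FinDGSet G)ᵒᵖ) :
    Function.Surjective ((toRestrictedYoneda F).app S) := by
  intro u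
  let D := carrierDiagram (elementsDiagram F)
  have : Finite S.unop.obj.carrier := S.unop.property
  obtain ⟨m, y, hy⟩ := D.exists_ιColimitType_eq_of_finite
    fun s : S.unop.obj.carrier => (equivShrink _).symm (u.1 s)
  have : Finite (D.obj m) := m.unop.1.unop.property
  obtain ⟨k, f, hf⟩ := D.exists_hom_map_eq_map_of_finite m
  have hsmul (g : G) (s) : D.map f (y (g • s)) = g • D.map f (y s) := by
    refine (hf _ _ ?_).trans (((elementsDiagram F).map f).2 g (y s))
    rw [hy, ← smul_ιColimitType, hy, u.2]
    exact equivShrink_symm_smul g (u.1 s)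
  let w : S.unop ⟶ k.unop.1.unop := ObjectProperty.homMk ⟨fun s => D.map f (y s), hsmul⟩
  refine ⟨F.map w.op k.unop.2, hom_ext fun s => ?_⟩
  let ψ : op (F.elementsMk S (F.map w.op k.unop.2)) ⟶ k :=
    (show k.unop ⟶ F.elementsMk S _ from ⟨w.op, rfl⟩).op
  have hψ : D.ιColimitType k (D.map f (y s)) = (equivShrink _).symm (u.1 s) :=
    (D.ιColimitType_map f (y s)).trans (hy s)
  exact (congrArg (equivShrink _) ((D.ιColimitType_map ψ s).symm.trans hψ)).trans
    (Equiv.apply_symm_apply _ _)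

instance : IsIso (toRestrictedYoneda F) :=
  have (S : (FinDGSet G)ᵒᵖ) : IsIso ((toRestrictedYoneda F).app S) :=
    (isIso_iff_bijective _).2
      ⟨toRestrictedYoneda_app_injective F S, toRestrictedYoneda_app_surjective F S⟩
  NatIso.isIso_of_isIso_app _

end EssSurj

variable [CompactSpace G]

noncomputable def fullyFaithfulLeftExactRestrictedYoneda :
    (leftExactRestrictedYoneda G).FullyFaithful :=
  Functor.FullyFaithful.ofCompFaithful (G := ObjectProperty.ι _)
    (fullyFaithfulRestrictedYoneda G)

instance : (leftExactRestrictedYoneda G).EssSurj where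
  mem_essImage F :=
    have := F.property
    ⟨ofPresheaf F.obj,
      ⟨(ObjectProperty.ι _).preimageIso (asIso (toRestrictedYoneda F.obj)).symm⟩⟩

instance : (leftExactRestrictedYoneda G).IsEquivalence where
  faithful := fullyFaithfulLeftExactRestrictedYoneda.faithful
  full := fullyFaithfulLeftExactRestrictedYoneda.full

end DGSet

theorem stmt7 [IsTopologicalGroup G] [CompactSpace G] :
    ∃ Φ : DGSet G ⥤
        ObjectProperty.FullSubcategory
          (fun F : (ObjectProperty.FullSubcategory (fun X : DGSet G => Finite X.carrier))ᵒᵖ ⥤ Type u =>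
            PreservesFiniteLimits F),
      (∀ (X : DGSet G) (S : (ObjectProperty.FullSubcategory (fun X : DGSet G => Finite X.carrier))ᵒᵖ),
        (Φ.obj X).obj.obj S = ((ObjectProperty.ι _).obj S.unop ⟶ X)) ∧
      Φ.IsEquivalence :=
  ⟨DGSet.leftExactRestrictedYoneda G, fun _ _ => rfl, inferInstance⟩
end

section
/- Let G be a profinite group and M an abelian group with discrete G-action via continuous maps. The functor sending a discrete G-module N to Map_c(G, N)^H (continuous maps G → N fixed by an open subgroup H, with the translation action) is exact as a functor from discrete G-modules to abelian groups. -/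
/-!
Post-composing with a map `φ : N → M` can only enlarge the translation stabilizer of
`θ : G → N`, and a subgroup containing an open subgroup is open. So `θ ↦ φ ∘ θ` preserves
`Map_c(G, -)^H` for every map `φ`, additive or not; composing with a set-theoretic section
of `g`, or with a left inverse of `f` on its image, yields the lifts that exactness asks for.
-/

variable {G : Type*} [Group G] [TopologicalSpace G]

/-- For a profinite group `G`, an open subgroup `H ≤ G` and a discrete `G`-module `N`, the
predicate on `θ : G → N` of lying in `Map_c(G, N)^H`: the stabilizer of `θ` for the
translation action `(g • θ) g' = θ (g' * g)` is open (i.e. `θ` is continuous for `N`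
discrete), and `θ` is fixed by every element of `H`. -/
def MapcH (H : Subgroup G) {N : Type*} (θ : G → N) : Prop :=
  IsOpen {g : G | ∀ g' : G, θ (g' * g) = θ g'} ∧
    ∀ h ∈ H, ∀ g' : G, θ (g' * h) = θ g'

section Stabilizer

variable {Γ N M : Type*} [Group Γ]

def translationStabilizer (θ : Γ → N) : Subgroup Γ where
  carrier := {g : Γ | ∀ g' : Γ, θ (g' * g) = θ g'}
  one_mem' := by simp
  mul_mem' {a b} ha hb g' := by rw [← mul_assoc, hb, ha]
  inv_mem' {a} ha g' := by simpa using (ha (g' * a⁻¹)).symm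

theorem translationStabilizer_le_comp (θ : Γ → N) (φ : N → M) :
    translationStabilizer θ ≤ translationStabilizer (φ ∘ θ) :=
  fun _ hg g' => congrArg φ (hg g')

end Stabilizer

namespace MapcH

variable {N M : Type*}

theorem comp [IsTopologicalGroup G] {H : Subgroup G} {θ : G → N} (hθ : MapcH H θ)
    (φ : N → M) : MapcH H (φ ∘ θ) :=
  ⟨Subgroup.isOpen_mono (translationStabilizer_le_comp θ φ) hθ.1,
    fun h hh g' => congrArg φ (hθ.2 h hh g')⟩

theorem exists_comp_eq_of_range_subset [IsTopologicalGroup G] [Nonempty N] {H : Subgroup G}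
    {θ : G → M} (hθ : MapcH H θ) {φ : N → M} (hrange : Set.range θ ⊆ Set.range φ) :
    ∃ θ' : G → N, MapcH H θ' ∧ φ ∘ θ' = θ :=
  ⟨Function.invFun φ ∘ θ, hθ.comp _,
    funext fun γ => Function.invFun_eq (hrange (Set.mem_range_self γ))⟩

end MapcH

theorem stmt11_general [IsTopologicalGroup G]
    (H : Subgroup G)
    {N₁ N₂ N₃ : Type*} [AddCommGroup N₁] [AddCommGroup N₂] [AddCommGroup N₃]
    (f : N₁ →+ N₂) (g : N₂ →+ N₃)
    (hfinj : Function.Injective f) (hgsurj : Function.Surjective g)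
    (hexact : ∀ y : N₂, g y = 0 ↔ ∃ x : N₁, f x = y) :
    (∀ θ : G → N₁, MapcH H θ → MapcH H (fun γ => f (θ γ))) ∧
    (∀ θ : G → N₂, MapcH H θ → MapcH H (fun γ => g (θ γ))) ∧
    (∀ θ θ' : G → N₁, MapcH H θ → MapcH H θ' →
      (fun γ => f (θ γ)) = (fun γ => f (θ' γ)) → θ = θ') ∧
    (∀ θ₂ : G → N₂, MapcH H θ₂ →
      (((fun γ => g (θ₂ γ)) = fun _ => 0) ↔
        ∃ θ₁ : G → N₁, MapcH H θ₁ ∧ (fun γ => f (θ₁ γ)) = θ₂)) ∧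
    (∀ θ₃ : G → N₃, MapcH H θ₃ →
      ∃ θ₂ : G → N₂, MapcH H θ₂ ∧ (fun γ => g (θ₂ γ)) = θ₃) := by
  refine ⟨fun θ hθ => hθ.comp f, fun θ hθ => hθ.comp g,
    fun θ θ' _ _ hff => hfinj.comp_left hff, fun θ₂ hθ₂ => ⟨fun hg => ?_, ?_⟩,
    fun θ₃ hθ₃ => hθ₃.exists_comp_eq_of_range_subset (by simp [hgsurj.range_eq])⟩
  · refine hθ₂.exists_comp_eq_of_range_subset ?_
    rintro _ ⟨γ, rfl⟩
    exact (hexact _).mp (congrFun hg γ)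
  · rintro ⟨θ₁, -, rfl⟩
    exact funext fun γ => (hexact _).mpr ⟨θ₁ γ, rfl⟩

/-- For a profinite group `G` and an open subgroup `H`, the functor `N ↦ Map_c(G, N)^H` is
exact on discrete `G`-modules: it preserves short exact sequences.  Given a short exact
sequence `0 → N₁ → N₂ → N₃ → 0` of discrete `G`-modules, the induced sequence
`0 → Map_c(G,N₁)^H → Map_c(G,N₂)^H → Map_c(G,N₃)^H → 0` is exact. -/
theorem stmt11 [IsTopologicalGroup G] [CompactSpace G] [T2Space G]
    [TotallyDisconnectedSpace G]
    (H : Subgroup G) (hH : IsOpen (H : Set G))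
    {N₁ N₂ N₃ : Type*} [AddCommGroup N₁] [AddCommGroup N₂] [AddCommGroup N₃]
    [DistribMulAction G N₁] [DistribMulAction G N₂] [DistribMulAction G N₃]
    (hd₁ : ∀ n : N₁, IsOpen ((MulAction.stabilizer G n : Subgroup G) : Set G))
    (hd₂ : ∀ n : N₂, IsOpen ((MulAction.stabilizer G n : Subgroup G) : Set G))
    (hd₃ : ∀ n : N₃, IsOpen ((MulAction.stabilizer G n : Subgroup G) : Set G))
    (f : N₁ →+ N₂) (g : N₂ →+ N₃)
    (hfG : ∀ (γ : G) (x : N₁), f (γ • x) = γ • f x)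
    (hgG : ∀ (γ : G) (x : N₂), g (γ • x) = γ • g x)
    (hfinj : Function.Injective f) (hgsurj : Function.Surjective g)
    (hexact : ∀ y : N₂, g y = 0 ↔ ∃ x : N₁, f x = y) :
    (∀ θ : G → N₁, MapcH H θ → MapcH H (fun γ => f (θ γ))) ∧
    (∀ θ : G → N₂, MapcH H θ → MapcH H (fun γ => g (θ γ))) ∧
    (∀ θ θ' : G → N₁, MapcH H θ → MapcH H θ' →
      (fun γ => f (θ γ)) = (fun γ => f (θ' γ)) → θ = θ') ∧
    (∀ θ₂ : G → N₂, MapcH H θ₂ →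
      (((fun γ => g (θ₂ γ)) = fun _ => 0) ↔
        ∃ θ₁ : G → N₁, MapcH H θ₁ ∧ (fun γ => f (θ₁ γ)) = θ₂)) ∧
    (∀ θ₃ : G → N₃, MapcH H θ₃ →
      ∃ θ₂ : G → N₂, MapcH H θ₂ ∧ (fun γ => g (θ₂ γ)) = θ₃) :=
  stmt11_general H f g hfinj hgsurj hexact
end

section
/- Let G be a finite group, R a commutative ring, and S a commutative R-algebra with G-action by R-algebra maps such that: (1) R → S^G is an isomorphism, (2) the canonical map S ⊗_R S → Map(G, S) (s ⊗ t ↦ (g ↦ s·g(t))) is an isomorphism, and (3) S is faithfully flat over R. Then for every R-module N, the natural map N → (S ⊗_R N)^G is an isomorphism. -/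
/-!
The Amitsur complex `N → S ⊗ N → S ⊗ S ⊗ N`, with differential
`s ⊗ n ↦ s ⊗ 1 ⊗ n - 1 ⊗ s ⊗ n`, becomes split exact after applying `S ⊗ -`: multiplying the
first two tensor factors is a contracting homotopy. Faithful flatness of `S` then makes the
complex itself exact. Under `S ⊗ S ⊗ N ≅ Map(G, S ⊗ N)`, induced by the Galois condition, the
differential sends `x` to `g ↦ x - g • x`, so its kernel is exactly the `G`-fixed part.
-/

open scoped TensorProduct

section AmitsurComplex

open LinearMap TensorProduct

theorem LinearMap.exact_of_comp_eq_zero_of_homotopy {R M N P : Type*} [Ring R]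
    [AddCommGroup M] [AddCommGroup N] [AddCommGroup P] [Module R M] [Module R N] [Module R P]
    {f : M →ₗ[R] N} {g : N →ₗ[R] P} (p : N →ₗ[R] M) (h : P →ₗ[R] N)
    (hgf : g ∘ₗ f = 0) (hp : h ∘ₗ g = f ∘ₗ p - LinearMap.id) : Function.Exact f g :=
  exact_of_comp_of_mem_range hgf fun y hy =>
    ⟨p y, sub_eq_zero.mp (by simpa [hy] using congr($hp y).symm)⟩

theorem pi_rTensor_proj_comp_injective {R A N ι : Type*} {M : ι → Type*} [CommSemiring R]
    [Finite ι] [AddCommMonoid A] [AddCommMonoid N] [∀ i, AddCommMonoid (M i)]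
    [Module R A] [Module R N] [∀ i, Module R (M i)] (Φ : A →ₗ[R] (∀ i, M i))
    (hΦ : Function.Bijective Φ) :
    Function.Injective (LinearMap.pi fun i => rTensor N (LinearMap.proj i ∘ₗ Φ)) := by
  cases nonempty_fintype ι
  classical
  have : LinearMap.pi (fun i => rTensor N (LinearMap.proj i ∘ₗ Φ)) =
      (piLeft R N M).toLinearMap ∘ₗ (LinearEquiv.ofBijective Φ hΦ).rTensor N := by
    ext a n i
    simp
  rw [this]
  exact (piLeft R N M).injective.comp (LinearEquiv.injective _)

variable (R S N : Type*) [CommRing R] [CommRing S] [Algebra R S] [AddCommGroup N] [Module R N]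

noncomputable def amitsurDiff : S ⊗[R] N →ₗ[R] S ⊗[R] (S ⊗[R] N) :=
  lTensor S (TensorProduct.mk R S N 1) - TensorProduct.mk R S (S ⊗[R] N) 1

variable {R S N}

@[simp]
theorem amitsurDiff_tmul (s : S) (n : N) :
    amitsurDiff R S N (s ⊗ₜ n) = s ⊗ₜ (1 ⊗ₜ n) - 1 ⊗ₜ (s ⊗ₜ n) :=
  rfl

variable (R S N)

theorem amitsurDiff_comp_mk : amitsurDiff R S N ∘ₗ TensorProduct.mk R S N 1 = 0 := by
  ext n
  simp

theorem lTensor_mk_exact_lTensor_amitsurDiff :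
    Function.Exact (lTensor S (TensorProduct.mk R S N 1)) (lTensor S (amitsurDiff R S N)) := by
  refine exact_of_comp_eq_zero_of_homotopy ((LinearMap.id.liftBaseChange S).restrictScalars R)
    ((LinearMap.id.liftBaseChange S).restrictScalars R) ?_ ?_
  · rw [← lTensor_comp, amitsurDiff_comp_mk, lTensor_zero]
  · ext s t n
    simp [tmul_sub, smul_tmul']

theorem mk_exact_amitsurDiff [Module.FaithfullyFlat R S] :
    Function.Exact (TensorProduct.mk R S N 1) (amitsurDiff R S N) :=
  Module.FaithfullyFlat.lTensor_reflects_exact R S _ _ (lTensor_mk_exact_lTensor_amitsurDiff R S N)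

variable {R S N} in
theorem amitsurDiff_eq_zero_iff_forall_smul_eq {G : Type*} [Monoid G] [Finite G]
    [MulSemiringAction G S] [SMulCommClass G R S] (Φ : S ⊗[R] S →ₗ[R] (G → S))
    (hΦ : ∀ (s t : S) (g : G), Φ (s ⊗ₜ t) g = s * g • t) (hbij : Function.Bijective Φ)
    (x : S ⊗[R] N) :
    amitsurDiff R S N x = 0 ↔ ∀ g : G, rTensor N (DistribSMul.toLinearMap R S g) x = x := by
  have twist (g : G) (y : S ⊗[R] N) :
      rTensor N (LinearMap.proj g ∘ₗ Φ)
          ((TensorProduct.assoc R S S N).symm (amitsurDiff R S N y)) =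
        y - rTensor N (DistribSMul.toLinearMap R S g) y := by
    induction y using TensorProduct.induction_on with
    | zero => simp
    | tmul s n => simp [hΦ]
    | add y z hy hz => simp only [map_add, hy, hz]; abel
  rw [← (TensorProduct.assoc R S S N).symm.map_eq_zero_iff,
    ← (pi_rTensor_proj_comp_injective (N := N) Φ hbij).eq_iff, map_zero]
  simp only [funext_iff, LinearMap.pi_apply, Pi.zero_apply]
  refine forall_congr' fun g => ?_
  rw [twist, sub_eq_zero, eq_comm]

end AmitsurComplex

theorem stmt15_general {R S : Type*} [CommRing R] [CommRing S] [Algebra R S]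
    (G : Type*) [Group G] [Finite G] [MulSemiringAction G S] [SMulCommClass G R S]
    (h2 : ∃ Φ : S ⊗[R] S →ₗ[R] (G → S),
      (∀ (s t : S) (g : G), Φ (s ⊗ₜ[R] t) g = s * g • t) ∧ Function.Bijective Φ)
    (h3 : Module.FaithfullyFlat R S) :
    ∀ (N : Type*) [AddCommGroup N] [Module R N],
      Function.Injective (fun n : N => ((1 : S) ⊗ₜ[R] n : S ⊗[R] N)) ∧
      ∀ x : S ⊗[R] N,
        (∀ g : G, LinearMap.rTensor N (DistribMulAction.toLinearMap R S g) x = x) ↔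
          ∃ n : N, (1 : S) ⊗ₜ[R] n = x := by
  obtain ⟨Φ, hΦ, hbij⟩ := h2
  intro N _ _
  exact ⟨Module.FaithfullyFlat.tensorProduct_mk_injective N, fun x =>
    (amitsurDiff_eq_zero_iff_forall_smul_eq Φ hΦ hbij x).symm.trans
      (mk_exact_amitsurDiff R S N x)⟩

/-- Let `G` be a finite group acting on a commutative `R`-algebra `S` by `R`-algebra maps,
such that `R ≅ S^G`, the canonical map `S ⊗[R] S → Map(G, S)`, `s ⊗ t ↦ (g ↦ s * g • t)`,
is bijective, and `S` is faithfully flat over `R`.  Then for every `R`-module `N` the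
natural map `N → (S ⊗[R] N)^G`, `n ↦ 1 ⊗ n`, is a bijection onto the `G`-fixed elements,
where `G` acts on `S ⊗[R] N` through its action on `S`. -/
theorem stmt15 {R S : Type*} [CommRing R] [CommRing S] [Algebra R S]
    (G : Type*) [Group G] [Finite G] [MulSemiringAction G S] [SMulCommClass G R S]
    (h1 : ∀ s : S, (∀ g : G, g • s = s) ↔ ∃ r : R, algebraMap R S r = s)
    (h1' : Function.Injective (algebraMap R S))
    (h2 : ∃ Φ : S ⊗[R] S →ₗ[R] (G → S),
      (∀ (s t : S) (g : G), Φ (s ⊗ₜ[R] t) g = s * g • t) ∧ Function.Bijective Φ)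
    (h3 : Module.FaithfullyFlat R S) :
    ∀ (N : Type*) [AddCommGroup N] [Module R N],
      Function.Injective (fun n : N => ((1 : S) ⊗ₜ[R] n : S ⊗[R] N)) ∧
      ∀ x : S ⊗[R] N,
        (∀ g : G, LinearMap.rTensor N (DistribMulAction.toLinearMap R S g) x = x) ↔
          ∃ n : N, (1 : S) ⊗ₜ[R] n = x :=
  stmt15_general G h2 h3
end

section
/- Let G be a finite group and R → S a G-Galois extension of commutative rings (i.e., R ≅ S^G and S ⊗_R S ≅ Map(G,S) via s⊗t ↦ (g ↦ s·g(t))) with S faithfully flat over R. If M is an S-module with semilinear G-action such that M^G = 0, then M = 0. -/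
open scoped TensorProduct

/-- Let `G` be a finite group and `R → S` a faithfully flat `G`-Galois extension of
commutative rings (`R ≅ S^G` and `S ⊗[R] S ≅ Map(G,S)` via `s ⊗ t ↦ (g ↦ s * g • t)`).
If `M` is an `S`-module with semilinear `G`-action whose fixed points vanish, then `M = 0`. -/
theorem stmt16 {R S : Type*} [CommRing R] [CommRing S] [Algebra R S]
    (G : Type*) [Group G] [Finite G] [MulSemiringAction G S] [SMulCommClass G R S]
    (h1 : ∀ s : S, (∀ g : G, g • s = s) ↔ ∃ r : R, algebraMap R S r = s)
    (h1' : Function.Injective (algebraMap R S))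
    (h2 : ∃ Φ : S ⊗[R] S →ₗ[R] (G → S),
      (∀ (s t : S) (g : G), Φ (s ⊗ₜ[R] t) g = s * g • t) ∧ Function.Bijective Φ)
    (h3 : Module.FaithfullyFlat R S)
    (M : Type*) [AddCommGroup M] [Module S M] [DistribMulAction G M]
    (hsemi : ∀ (g : G) (s : S) (m : M), g • (s • m) = (g • s) • (g • m))
    (hfix : ∀ m : M, (∀ g : G, g • m = m) → m = 0) :
    ∀ m : M, m = 0 := by
  intro m
  classical
  obtain ⟨Φ, hΦ, hbij⟩ := h2
  cases nonempty_fintype G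
  obtain ⟨u, hu⟩ := hbij.surjective (fun g => if g = 1 then 1 else 0)
  obtain ⟨T, hT⟩ := TensorProduct.exists_finset u
  have trace0 : ∀ y : S, (∑ g : G, g • (y • m)) = 0 := by
    intro y
    apply hfix
    intro h
    rw [Finset.smul_sum]
    rw [← Equiv.sum_comp (Equiv.mulLeft h) (fun g => g • (y • m))]
    simp [mul_smul]
  have key : ∀ g : G, (∑ i ∈ T, i.1 * g • i.2) = if g = 1 then (1 : S) else 0 := by
    intro g
    have h := congrFun hu g
    rw [hT, map_sum] at h
    simpa [hΦ] using h
  have calc1 : (∑ i ∈ T, i.1 • (∑ g : G, g • (i.2 • m))) = m := by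
    have step : ∀ i ∈ T, i.1 • (∑ g : G, g • ((i : S × S).2 • m))
        = ∑ g : G, (i.1 * g • i.2) • (g • m) := by
      intro i _
      rw [Finset.smul_sum]
      refine Finset.sum_congr rfl fun g _ => ?_
      rw [hsemi, smul_smul]
    rw [Finset.sum_congr rfl step, Finset.sum_comm]
    have : ∀ g : G, (∑ i ∈ T, (i.1 * g • i.2) • (g • m))
        = (if g = 1 then (1 : S) else 0) • (g • m) := by
      intro g
      rw [← Finset.sum_smul, key g]
    rw [Finset.sum_congr rfl fun g _ => this g]
    simp
  rw [← calc1]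
  simp [trace0]
end

section
/- Let G be a finite group and R → S a faithfully flat G-Galois extension of commutative rings. Then the extension-of-scalars functor M ↦ S ⊗_R M from R-modules to S-modules with semilinear G-action is an equivalence of categories, with quasi-inverse N ↦ N^G. -/
open scoped TensorProduct

/-- The `R`-submodule of `G`-fixed points of an `S`-module `M` with semilinear `G`-action. -/
def fixedSubmodule (R S : Type*) [CommRing R] [CommRing S] [Algebra R S]
    (G : Type*) [Group G] [MulSemiringAction G S] [SMulCommClass G R S]
    (M : Type*) [AddCommGroup M] [Module S M] [Module R M] [IsScalarTower R S M]
    [DistribMulAction G M]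
    (hsemi : ∀ (g : G) (s : S) (m : M), g • (s • m) = (g • s) • (g • m)) :
    Submodule R M where
  carrier := {m : M | ∀ g : G, g • m = m}
  add_mem' := fun ha hb g => by rw [smul_add, ha g, hb g]
  zero_mem' := fun g => smul_zero g
  smul_mem' := fun r m hm => by
    intro g
    have h1 : r • m = (algebraMap R S r) • m := (algebraMap_smul S r m).symm
    have h2 : g • (algebraMap R S r) = algebraMap R S r := by
      calc g • (algebraMap R S r) = g • (r • (1 : S)) := by
              rw [Algebra.algebraMap_eq_smul_one]
        _ = r • (g • (1 : S)) := smul_comm g r (1 : S)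
        _ = r • (1 : S) := by rw [smul_one]
        _ = algebraMap R S r := (Algebra.algebraMap_eq_smul_one r).symm
    rw [h1, hsemi, hm g, h2, ← h1]

/-!
Surjectivity of `S ⊗[R] S → (G → S)` yields Galois coordinates: finitely many pairs
`(xᵢ, yᵢ)` with `∑ i, xᵢ * g • yᵢ = δ_{g,1}`. They invert the counit `S ⊗[R] M^G → M` by
`m ↦ ∑ i, xᵢ ⊗ ∑ g, g • (yᵢ • m)`. For `M = S, m = 1` this shows that the traces generate an
ideal of `R` whose extension to `S` is the unit ideal, so by faithful flatness some `c : S` has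
trace `1`. A fixed `x : S ⊗[R] N` is then the trace of `c • x`, and traces of `S ⊗[R] N` lie in
`1 ⊗ N`; injectivity of `N → S ⊗[R] N` is faithful flatness again.
-/

section GaloisDescent

open Finset

section FiniteGroupAction

variable {G M : Type*} [Group G] [Fintype G] [AddCommMonoid M] [DistribMulAction G M]

theorem smul_sum_smul (g : G) (m : M) : g • ∑ h : G, h • m = ∑ h : G, h • m := by
  rw [smul_sum]
  exact Fintype.sum_equiv (Equiv.mulLeft g) _ _ fun h => smul_smul g h m

end FiniteGroupAction

variable {R S : Type*} [CommRing R] [CommRing S] [Algebra R S]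
  {G : Type*} [Group G] [MulSemiringAction G S]

section Semilinear

variable {M : Type*} [AddCommGroup M] [Module S M] [DistribMulAction G M]

theorem sum_smul_smul_of_fixed [Fintype G]
    (hsemi : ∀ (g : G) (s : S) (m : M), g • (s • m) = (g • s) • (g • m))
    (u : S) {m : M} (hm : ∀ g : G, g • m = m) :
    ∑ g : G, g • (u • m) = (∑ g : G, g • u) • m := by
  simp only [hsemi, hm, sum_smul]

theorem smul_smul_comm_of_semilinear [SMulCommClass G R S] [Module R M]
    [IsScalarTower R S M]
    (hsemi : ∀ (g : G) (s : S) (m : M), g • (s • m) = (g • s) • (g • m))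
    (g : G) (r : R) (m : M) : g • (r • m) = r • (g • m) := by
  rw [← algebraMap_smul S r m, hsemi, smul_algebraMap, algebraMap_smul]

variable (R S G M) in
def fixedTrace [SMulCommClass G R S] [Fintype G] [Module R M] [IsScalarTower R S M]
    (hsemi : ∀ (g : G) (s : S) (m : M), g • (s • m) = (g • s) • (g • m)) :
    M →ₗ[R] fixedSubmodule R S G M hsemi where
  toFun m := ⟨∑ g : G, g • m, fun g => smul_sum_smul g m⟩
  map_add' m n := by ext; simp [smul_add, sum_add_distrib]
  map_smul' r m := by ext; simp [smul_smul_comm_of_semilinear hsemi, smul_sum]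

end Semilinear

-- Galois coordinates in the sense of Chase, Harrison and Rosenberg.
variable (G) in
def IsGaloisCoordinates [DecidableEq G] (T : Finset (S × S)) : Prop :=
  ∀ g : G, ∑ p ∈ T, p.1 * g • p.2 = if g = 1 then 1 else 0

theorem exists_isGaloisCoordinates [DecidableEq G] (Φ : S ⊗[R] S →ₗ[R] (G → S))
    (hΦ : ∀ (s t : S) (g : G), Φ (s ⊗ₜ[R] t) g = s * g • t) (hsurj : Function.Surjective Φ) :
    ∃ T : Finset (S × S), IsGaloisCoordinates G T := by
  obtain ⟨e, he⟩ := hsurj fun g => if g = 1 then 1 else 0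
  obtain ⟨T, rfl⟩ := TensorProduct.exists_finset e
  refine ⟨T, fun g => ?_⟩
  rw [← congrFun he g, map_sum, Finset.sum_apply]
  simp only [hΦ]

namespace IsGaloisCoordinates

variable [Fintype G] [DecidableEq G] {T : Finset (S × S)}

theorem sum_smul_sum_smul (hT : IsGaloisCoordinates G T)
    {M : Type*} [AddCommGroup M] [Module S M] [DistribMulAction G M]
    (hsemi : ∀ (g : G) (s : S) (m : M), g • (s • m) = (g • s) • (g • m)) (m : M) :
    ∑ p ∈ T, p.1 • ∑ g : G, g • (p.2 • m) = m := by
  calc ∑ p ∈ T, p.1 • ∑ g : G, g • (p.2 • m)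
      = ∑ g : G, (∑ p ∈ T, p.1 * g • p.2) • g • m := by
        simp only [smul_sum, sum_smul, hsemi, mul_smul]
        exact sum_comm
    _ = m := by simp [hT _, ite_smul]

theorem sum_mul_sum_smul (hT : IsGaloisCoordinates G T) (s : S) :
    ∑ p ∈ T, p.1 * ∑ g : G, g • (p.2 * s) = s :=
  hT.sum_smul_sum_smul (fun g _ _ => smul_mul' g _ _) s

theorem exists_sum_smul_eq_one [SMulCommClass G R S] [Module.FaithfullyFlat R S]
    (hT : IsGaloisCoordinates G T)
    (hfix : ∀ s : S, (∀ g : G, g • s = s) → ∃ r : R, algebraMap R S r = s) :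
    ∃ c : S, ∑ g : G, g • c = 1 := by
  let tr : S →ₗ[R] S := ∑ g : G, DistribSMul.toLinearMap R S g
  have htr (s : S) : tr s = ∑ g : G, g • s := by simp [tr]
  let I : Ideal R := (LinearMap.range tr).comap (Algebra.linearMap R S)
  suffices (1 : R) ∈ I by
    obtain ⟨c, hc⟩ := this
    exact ⟨c, by simpa [htr] using hc⟩
  rw [← Ideal.comap_map_eq_self_of_faithfullyFlat (B := S) I, Ideal.mem_comap, map_one,
    ← hT.sum_mul_sum_smul 1]
  simp_rw [mul_one]
  refine Ideal.sum_mem _ fun p _ => Ideal.mul_mem_left _ _ ?_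
  obtain ⟨r, hr⟩ := hfix _ fun g => smul_sum_smul g p.2
  rw [← hr]
  exact Ideal.mem_map_of_mem _ ⟨p.2, by simp [htr, hr]⟩

end IsGaloisCoordinates

section Unit

variable [SMulCommClass G R S] {N : Type*} [AddCommGroup N] [Module R N]

open LinearMap

theorem rTensor_toLinearMap_smul (g : G) (s : S) (x : S ⊗[R] N) :
    rTensor N (DistribSMul.toLinearMap R S g) (s • x) =
      (g • s) • rTensor N (DistribSMul.toLinearMap R S g) x := by
  induction x using TensorProduct.induction_on with
  | zero => simp
  | tmul t n => simp [TensorProduct.smul_tmul', smul_mul']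
  | add x y hx hy => simp only [smul_add, map_add, hx, hy]

theorem exists_one_tmul_eq_sum_rTensor [Fintype G]
    (hfix : ∀ s : S, (∀ g : G, g • s = s) → ∃ r : R, algebraMap R S r = s) (x : S ⊗[R] N) :
    ∃ n : N, (1 : S) ⊗ₜ[R] n = ∑ g : G, rTensor N (DistribSMul.toLinearMap R S g) x := by
  induction x using TensorProduct.induction_on with
  | zero => exact ⟨0, by simp⟩
  | tmul s n =>
    obtain ⟨r, hr⟩ := hfix _ fun g => smul_sum_smul g s
    refine ⟨r • n, ?_⟩
    rw [← TensorProduct.smul_tmul, Algebra.smul_def, mul_one, hr, TensorProduct.sum_tmul]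
    simp
  | add x y hx hy =>
    obtain ⟨n, hn⟩ := hx
    obtain ⟨n', hn'⟩ := hy
    exact ⟨n + n', by simp [TensorProduct.tmul_add, hn, hn', sum_add_distrib]⟩

theorem forall_rTensor_eq_iff_exists_one_tmul [Fintype G]
    (hfix : ∀ s : S, (∀ g : G, g • s = s) → ∃ r : R, algebraMap R S r = s)
    {c : S} (hc : ∑ g : G, g • c = 1) (x : S ⊗[R] N) :
    (∀ g : G, rTensor N (DistribSMul.toLinearMap R S g) x = x) ↔
      ∃ n : N, (1 : S) ⊗ₜ[R] n = x := by
  refine ⟨fun hx => ?_, ?_⟩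
  · obtain ⟨n, hn⟩ := exists_one_tmul_eq_sum_rTensor hfix (c • x)
    refine ⟨n, ?_⟩
    calc (1 : S) ⊗ₜ[R] n = ∑ g : G, rTensor N (DistribSMul.toLinearMap R S g) (c • x) := hn
      _ = ∑ g : G, (g • c) • x := by simp only [rTensor_toLinearMap_smul, hx]
      _ = x := by rw [← sum_smul, hc, one_smul]
  · rintro ⟨n, rfl⟩ g
    simp

end Unit

section Counit

variable [SMulCommClass G R S] [Fintype G]
  {M : Type*} [AddCommGroup M] [Module S M] [Module R M] [IsScalarTower R S M]
  [DistribMulAction G M] {hsemi : ∀ (g : G) (s : S) (m : M), g • (s • m) = (g • s) • (g • m)}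

theorem fixedTrace_smul_of_algebraMap_eq {u : S} {r : R}
    (hr : algebraMap R S r = ∑ g : G, g • u) (m : fixedSubmodule R S G M hsemi) :
    fixedTrace R S G M hsemi (u • (m : M)) = r • m := by
  ext
  simp [fixedTrace, sum_smul_smul_of_fixed hsemi u m.2, ← hr, algebraMap_smul]

theorem IsGaloisCoordinates.bijective_liftBaseChange_subtype [DecidableEq G]
    {T : Finset (S × S)} (hT : IsGaloisCoordinates G T)
    (hfix : ∀ s : S, (∀ g : G, g • s = s) → ∃ r : R, algebraMap R S r = s) :
    Function.Bijective ((fixedSubmodule R S G M hsemi).subtype.liftBaseChange S) := by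
  set F := fixedSubmodule R S G M hsemi
  let ρ : M →ₗ[R] S ⊗[R] F := ∑ p ∈ T, TensorProduct.mk R S F p.1 ∘ₗ
    fixedTrace R S G M hsemi ∘ₗ DistribSMul.toLinearMap R M p.2
  have hρ (m : M) : ρ m = ∑ p ∈ T, p.1 ⊗ₜ[R] fixedTrace R S G M hsemi (p.2 • m) := by
    simp [ρ]
  have right (m : M) : F.subtype.liftBaseChange S (ρ m) = m := by
    simpa [hρ, fixedTrace] using hT.sum_smul_sum_smul hsemi m
  have left (z : S ⊗[R] F) : ρ (F.subtype.liftBaseChange S z) = z := by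
    induction z using TensorProduct.induction_on with
    | zero => simp
    | tmul s m =>
      choose r hr using fun p : S × S => hfix (∑ g : G, g • (p.2 * s)) (smul_sum_smul · _)
      calc ρ (F.subtype.liftBaseChange S (s ⊗ₜ m))
          = ∑ p ∈ T, p.1 ⊗ₜ[R] (r p • m) := by
            rw [LinearMap.liftBaseChange_tmul, hρ]
            refine sum_congr rfl fun p _ => ?_
            rw [Submodule.subtype_apply, ← mul_smul, fixedTrace_smul_of_algebraMap_eq (hr p)]
        _ = (∑ p ∈ T, p.1 * ∑ g : G, g • (p.2 * s)) ⊗ₜ[R] m := by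
            rw [TensorProduct.sum_tmul]
            refine sum_congr rfl fun p _ => ?_
            rw [← TensorProduct.smul_tmul, Algebra.smul_def, hr, mul_comm]
        _ = s ⊗ₜ m := by rw [hT.sum_mul_sum_smul]
    | add x y hx hy => simp only [map_add, hx, hy]
  exact ⟨Function.LeftInverse.injective left, Function.RightInverse.surjective right⟩

end Counit

end GaloisDescent

theorem stmt17_general {R S : Type*} [CommRing R] [CommRing S] [Algebra R S]
    (G : Type*) [Group G] [Finite G] [MulSemiringAction G S] [SMulCommClass G R S]
    (h1 : ∀ s : S, (∀ g : G, g • s = s) ↔ ∃ r : R, algebraMap R S r = s)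
    (h2 : ∃ Φ : S ⊗[R] S →ₗ[R] (G → S),
      (∀ (s t : S) (g : G), Φ (s ⊗ₜ[R] t) g = s * g • t) ∧ Function.Bijective Φ)
    (h3 : Module.FaithfullyFlat R S) :
    (∀ (N : Type*) [AddCommGroup N] [Module R N],
      Function.Injective (fun n : N => ((1 : S) ⊗ₜ[R] n : S ⊗[R] N)) ∧
      ∀ x : S ⊗[R] N,
        (∀ g : G, LinearMap.rTensor N (DistribMulAction.toLinearMap R S g) x = x) ↔
          ∃ n : N, (1 : S) ⊗ₜ[R] n = x) ∧
    (∀ (M : Type*) [AddCommGroup M] [Module S M] [Module R M] [IsScalarTower R S M]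
        [DistribMulAction G M]
        (hsemi : ∀ (g : G) (s : S) (m : M), g • (s • m) = (g • s) • (g • m)),
      ∃ Ψ : S ⊗[R] (fixedSubmodule R S G M hsemi) →ₗ[R] M,
        (∀ (s : S) (m : fixedSubmodule R S G M hsemi), Ψ (s ⊗ₜ[R] m) = s • (m : M)) ∧
        Function.Bijective Ψ) := by
  classical
  cases nonempty_fintype G
  have hfix (s : S) := (h1 s).1
  obtain ⟨Φ, hΦ, hΦbij⟩ := h2
  obtain ⟨T, hT⟩ := exists_isGaloisCoordinates Φ hΦ hΦbij.2
  obtain ⟨c, hc⟩ := hT.exists_sum_smul_eq_one hfix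
  refine ⟨fun N _ _ => ⟨Module.FaithfullyFlat.tensorProduct_mk_injective (B := S) N,
    forall_rTensor_eq_iff_exists_one_tmul hfix hc⟩, fun M _ _ _ _ _ hsemi => ?_⟩
  exact ⟨_, fun s m => rfl, hT.bijective_liftBaseChange_subtype (hsemi := hsemi) hfix⟩

/-- Classical Galois descent: for a finite group `G` and a faithfully flat `G`-Galois
extension `R → S` of commutative rings, extension of scalars `N ↦ S ⊗[R] N` is an
equivalence from `R`-modules to `S`-modules with semilinear `G`-action, with quasi-inverse
`M ↦ M^G`: the unit `N → (S ⊗[R] N)^G` and the counit `S ⊗[R] M^G → M` are bijective. -/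
theorem stmt17 {R S : Type*} [CommRing R] [CommRing S] [Algebra R S]
    (G : Type*) [Group G] [Finite G] [MulSemiringAction G S] [SMulCommClass G R S]
    (h1 : ∀ s : S, (∀ g : G, g • s = s) ↔ ∃ r : R, algebraMap R S r = s)
    (h1' : Function.Injective (algebraMap R S))
    (h2 : ∃ Φ : S ⊗[R] S →ₗ[R] (G → S),
      (∀ (s t : S) (g : G), Φ (s ⊗ₜ[R] t) g = s * g • t) ∧ Function.Bijective Φ)
    (h3 : Module.FaithfullyFlat R S) :
    (∀ (N : Type*) [AddCommGroup N] [Module R N],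
      Function.Injective (fun n : N => ((1 : S) ⊗ₜ[R] n : S ⊗[R] N)) ∧
      ∀ x : S ⊗[R] N,
        (∀ g : G, LinearMap.rTensor N (DistribMulAction.toLinearMap R S g) x = x) ↔
          ∃ n : N, (1 : S) ⊗ₜ[R] n = x) ∧
    (∀ (M : Type*) [AddCommGroup M] [Module S M] [Module R M] [IsScalarTower R S M]
        [DistribMulAction G M]
        (hsemi : ∀ (g : G) (s : S) (m : M), g • (s • m) = (g • s) • (g • m)),
      ∃ Ψ : S ⊗[R] (fixedSubmodule R S G M hsemi) →ₗ[R] M,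
        (∀ (s : S) (m : fixedSubmodule R S G M hsemi), Ψ (s ⊗ₜ[R] m) = s • (m : M)) ∧
        Function.Bijective Ψ) :=
  stmt17_general G h1 h2 h3
end
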